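/- arXiv:2007.02156 — 3 statements merged into one kernel-verified Lean document; each statement's English description precedes it below -/
import Mathlib

section
/- Under the assumptions 0 < b < a < 1 and 0 < β < 1, the matrix B_Z of the K-block homogeneous model with one binary covariate is positive semidefinite of rank K+1, its largest nonzero eigenvalue is 2a + 2(K−1)b + Kβ, and its smallest nonzero eigenvalue equals Kβ if β ≤ 2(a−b)/K and equals 2(a−b) if β > 2(a−b)/K. -/
/-!
For `B = blockCovariateMatrix ι κ a b β` and `v : ι × κ → ℝ`,
`(B *ᵥ v) (k, z) = (a - b) ∑ z', v (k, z') + b ∑ v + β ∑ k', v (k', z)`,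
so `B` only sees the row sums, the column sums and the total of `v`. Write `K = |ι|`, `m = |κ|`.
Summing an eigenvector equation over rows, over columns and over everything shows that an
eigenvector whose eigenvalue is none of `m (a - b) + K m b + K β` (the constants), `K β` (column
contrasts `w ∘ Prod.snd` with `∑ w = 0`) and `m (a - b)` (row contrasts) has vanishing marginals,
hence eigenvalue `0`. So the kernel of `B` is the kernel of the marginal map, whose range is the
hyperplane `∑ r = ∑ c`, and `B` has rank `K + m - 1`.
-/

open Matrix

variable {ι κ : Type*}

section marginals

variable [Fintype ι] [Fintype κ]

def marginals : (ι × κ → ℝ) →ₗ[ℝ] (ι → ℝ) × (κ → ℝ) where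
  toFun v := (fun k => ∑ z, v (k, z), fun z => ∑ k, v (k, z))
  map_add' v w := by ext <;> simp [Finset.sum_add_distrib]
  map_smul' c v := by ext <;> simp [Finset.mul_sum]

@[simp]
theorem marginals_apply (v : ι × κ → ℝ) :
    marginals v = (fun k => ∑ z, v (k, z), fun z => ∑ k, v (k, z)) := rfl

theorem finrank_range_marginals [Nonempty ι] [Nonempty κ] :
    Module.finrank ℝ (LinearMap.range (marginals (ι := ι) (κ := κ))) + 1 =
      Fintype.card ι + Fintype.card κ := by
  let f : Module.Dual ℝ ((ι → ℝ) × (κ → ℝ)) :=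
    (∑ k, LinearMap.proj k) ∘ₗ LinearMap.fst ℝ _ _ -
      (∑ z, LinearMap.proj z) ∘ₗ LinearMap.snd ℝ _ _
  have hrange : LinearMap.range marginals = LinearMap.ker f := by
    ext ⟨r, c⟩
    simp only [LinearMap.mem_range, marginals_apply, Prod.mk.injEq, LinearMap.mem_ker, f,
      LinearMap.sub_apply, LinearMap.coe_comp, Function.comp_apply, LinearMap.sum_apply,
      LinearMap.proj_apply, LinearMap.fst_apply, LinearMap.snd_apply, sub_eq_zero]
    constructor
    · rintro ⟨v, rfl, rfl⟩
      exact Finset.sum_comm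
    · classical
      intro h
      obtain ⟨k₀⟩ := ‹Nonempty ι›
      obtain ⟨z₀⟩ := ‹Nonempty κ›
      refine ⟨fun p => (if p.2 = z₀ then r p.1 else 0) + (if p.1 = k₀ then c p.2 else 0) -
        (if p.1 = k₀ then if p.2 = z₀ then ∑ z, c z else 0 else 0), ?_, ?_⟩ <;> ext
      · simp [Finset.sum_add_distrib, Finset.sum_sub_distrib]
      · simp [Finset.sum_add_distrib, Finset.sum_sub_distrib, h]
  have hf : f ≠ 0 := fun h => by
    simpa [f] using LinearMap.congr_fun h (1, 0)
  rw [hrange, Module.Dual.finrank_ker_add_one_of_ne_zero hf]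
  simp

end marginals

theorem exists_ne_zero_sum_eq_zero [Fintype ι] (h : 1 < Fintype.card ι) :
    ∃ c : ι → ℝ, c ≠ 0 ∧ ∑ k, c k = 0 := by
  classical
  obtain ⟨i, j, hij⟩ := Fintype.exists_pair_of_one_lt_card h
  refine ⟨Pi.single i 1 - Pi.single j 1, fun h => ?_, by simp⟩
  simpa [hij] using congrFun h i

theorem Matrix.IsHermitian.exists_eigenvalues_eq [Fintype ι] [DecidableEq ι] {A : Matrix ι ι ℝ}
    (hA : A.IsHermitian) {μ : ℝ} {v : ι → ℝ} (hv0 : v ≠ 0) (hv : A *ᵥ v = μ • v) :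
    ∃ i, hA.eigenvalues i = μ := by
  have hμ : μ ∈ spectrum ℝ A := by
    rw [← spectrum_toLin']
    exact (Module.End.hasEigenvalue_of_hasEigenvector
      ⟨Module.End.mem_eigenspace_iff.mpr (by simpa using hv), hv0⟩).mem_spectrum
  rwa [hA.spectrum_real_eq_range_eigenvalues] at hμ

theorem Matrix.IsHermitian.eigenvectorBasis_ne_zero [Fintype ι] [DecidableEq ι]
    {A : Matrix ι ι ℝ} (hA : A.IsHermitian) (i : ι) : ⇑(hA.eigenvectorBasis i) ≠ 0 :=
  fun h => hA.eigenvectorBasis.orthonormal.ne_zero i <| WithLp.ofLp_injective 2 (by simpa using h)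

variable [DecidableEq ι] [DecidableEq κ]

variable (ι κ) in
def blockCovariateMatrix (a b β : ℝ) : Matrix (ι × κ) (ι × κ) ℝ :=
  Matrix.of fun p q => (if p.1 = q.1 then a else b) + (if p.2 = q.2 then β else 0)

namespace blockCovariateMatrix

variable {a b β : ℝ}

theorem isHermitian : (blockCovariateMatrix ι κ a b β).IsHermitian := by
  ext p q
  simp [blockCovariateMatrix, eq_comm]

variable [Fintype ι] [Fintype κ]

theorem mulVec_apply (v : ι × κ → ℝ) (k : ι) (z : κ) :
    (blockCovariateMatrix ι κ a b β *ᵥ v) (k, z) =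
      (a - b) * ∑ z', v (k, z') + b * ∑ p, v p + β * ∑ k', v (k', z) := by
  have hentry : ∀ p q : ι × κ, blockCovariateMatrix ι κ a b β p q =
      (if p.1 = q.1 then a - b else 0) + b + (if p.2 = q.2 then β else 0) := by
    intro p q; simp only [blockCovariateMatrix, of_apply]; split_ifs <;> ring
  simp only [mulVec, dotProduct, hentry, add_mul, ite_mul, zero_mul, Finset.sum_add_distrib,
    Fintype.sum_prod_type, Finset.sum_ite_eq, Finset.mem_univ, if_true, ← Finset.mul_sum]
  rw [Fintype.sum_eq_single k fun x hx => Finset.sum_eq_zero fun _ _ => if_neg (Ne.symm hx)]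
  simp [Finset.mul_sum]

theorem mulVec_one :
    blockCovariateMatrix ι κ a b β *ᵥ 1 =
      (Fintype.card κ * (a - b) + Fintype.card ι * Fintype.card κ * b + Fintype.card ι * β) •
        1 := by
  ext ⟨k, z⟩
  simp [mulVec_apply, Fintype.card_prod]
  ring

theorem mulVec_comp_fst {c : ι → ℝ} (hc : ∑ k, c k = 0) :
    blockCovariateMatrix ι κ a b β *ᵥ (c ∘ Prod.fst) =
      (Fintype.card κ * (a - b)) • (c ∘ Prod.fst) := by
  ext ⟨k, z⟩
  simp [mulVec_apply, Fintype.sum_prod_type, ← Finset.mul_sum, hc]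
  ring

theorem mulVec_comp_snd {w : κ → ℝ} (hw : ∑ z, w z = 0) :
    blockCovariateMatrix ι κ a b β *ᵥ (w ∘ Prod.snd) =
      (Fintype.card ι * β) • (w ∘ Prod.snd) := by
  ext ⟨k, z⟩
  simp [mulVec_apply, Fintype.sum_prod_type, hw]
  ring

theorem marginals_eq_zero_of_mulVec_eq_smul {μ : ℝ} {v : ι × κ → ℝ}
    (hv : blockCovariateMatrix ι κ a b β *ᵥ v = μ • v)
    (h₁ : μ ≠ Fintype.card κ * (a - b) + Fintype.card ι * Fintype.card κ * b +
      Fintype.card ι * β)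
    (h₂ : μ ≠ Fintype.card ι * β) (h₃ : μ ≠ Fintype.card κ * (a - b)) :
    marginals v = 0 := by
  set K : ℝ := (Fintype.card ι : ℝ)
  set m : ℝ := (Fintype.card κ : ℝ)
  set S := ∑ k, ∑ z, v (k, z)
  have hpt : ∀ k z, (a - b) * ∑ z', v (k, z') + b * S + β * ∑ k', v (k', z) = μ * v (k, z) :=
    fun k z => by simpa [mulVec_apply, Fintype.sum_prod_type] using congrFun hv (k, z)
  have hrow : ∀ k, m * (a - b) * ∑ z, v (k, z) + m * b * S + β * S = μ * ∑ z, v (k, z) := by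
    intro k
    have := Finset.sum_congr rfl fun z (_ : z ∈ Finset.univ) => hpt k z
    simp only [Finset.sum_add_distrib, Finset.sum_const, Finset.card_univ, nsmul_eq_mul,
      ← Finset.mul_sum] at this
    rw [Finset.sum_comm] at this
    linear_combination this
  have hcol : ∀ z, (a - b) * S + K * b * S + K * β * ∑ k, v (k, z) = μ * ∑ k, v (k, z) := by
    intro z
    have := Finset.sum_congr rfl fun k (_ : k ∈ Finset.univ) => hpt k z
    simp only [Finset.sum_add_distrib, Finset.sum_const, Finset.card_univ, nsmul_eq_mul,
      ← Finset.mul_sum] at this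
    linear_combination this
  have hS : S = 0 := by
    have := Finset.sum_congr rfl fun k (_ : k ∈ Finset.univ) => hrow k
    simp only [Finset.sum_add_distrib, Finset.sum_const, Finset.card_univ, nsmul_eq_mul,
      ← Finset.mul_sum] at this
    refine (mul_eq_zero.mp (?_ : (m * (a - b) + K * m * b + K * β - μ) * S = 0)).resolve_left
      (sub_ne_zero.mpr (Ne.symm h₁))
    linear_combination this
  refine Prod.ext (funext fun k => ?_) (funext fun z => ?_)
  · refine (mul_eq_zero.mp (?_ : (m * (a - b) - μ) * ∑ z, v (k, z) = 0)).resolve_left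
      (sub_ne_zero.mpr (Ne.symm h₃))
    linear_combination hrow k - (m * b + β) * hS
  · refine (mul_eq_zero.mp (?_ : (K * β - μ) * ∑ k, v (k, z) = 0)).resolve_left
      (sub_ne_zero.mpr (Ne.symm h₂))
    linear_combination hcol z - (a - b + K * b) * hS

theorem mulVec_eq_zero_of_marginals_eq_zero {v : ι × κ → ℝ} (hv : marginals v = 0) :
    blockCovariateMatrix ι κ a b β *ᵥ v = 0 := by
  have hrow : ∀ k, ∑ z, v (k, z) = 0 := fun k => congrFun (congrArg Prod.fst hv) k
  have hcol : ∀ z, ∑ k, v (k, z) = 0 := fun z => congrFun (congrArg Prod.snd hv) z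
  ext ⟨k, z⟩
  simp [mulVec_apply, Fintype.sum_prod_type, hrow, hcol]

theorem eq_zero_of_mulVec_eq_smul {μ : ℝ} {v : ι × κ → ℝ}
    (hv : blockCovariateMatrix ι κ a b β *ᵥ v = μ • v) (hv0 : v ≠ 0)
    (h₁ : μ ≠ Fintype.card κ * (a - b) + Fintype.card ι * Fintype.card κ * b +
      Fintype.card ι * β)
    (h₂ : μ ≠ Fintype.card ι * β) (h₃ : μ ≠ Fintype.card κ * (a - b)) :
    μ = 0 := by
  have h := mulVec_eq_zero_of_marginals_eq_zero (a := a) (b := b) (β := β)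
    (marginals_eq_zero_of_mulVec_eq_smul hv h₁ h₂ h₃)
  rw [hv] at h
  exact (smul_eq_zero.mp h).resolve_right hv0

theorem eigenvalues_mem (hA : (blockCovariateMatrix ι κ a b β).IsHermitian) (i : ι × κ) :
    hA.eigenvalues i = 0 ∨
      hA.eigenvalues i = Fintype.card κ * (a - b) + Fintype.card ι * Fintype.card κ * b +
        Fintype.card ι * β ∨
      hA.eigenvalues i = Fintype.card ι * β ∨
      hA.eigenvalues i = Fintype.card κ * (a - b) := by
  by_contra! h
  exact h.1 (eq_zero_of_mulVec_eq_smul (hA.mulVec_eigenvectorBasis i)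
    (hA.eigenvectorBasis_ne_zero i) h.2.1 h.2.2.1 h.2.2.2)

theorem posSemidef (hb : 0 ≤ b) (hab : b ≤ a) (hβ : 0 ≤ β) :
    (blockCovariateMatrix ι κ a b β).PosSemidef := by
  refine isHermitian.posSemidef_iff_eigenvalues_nonneg.mpr fun i => ?_
  have hab' : 0 ≤ a - b := sub_nonneg.mpr hab
  rcases eigenvalues_mem isHermitian i with h | h | h | h <;>
    rw [Pi.zero_apply, h] <;> positivity

theorem exists_eigenvalues_eq_of_nonempty [Nonempty ι] [Nonempty κ]
    (hA : (blockCovariateMatrix ι κ a b β).IsHermitian) :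
    ∃ i, hA.eigenvalues i = Fintype.card κ * (a - b) + Fintype.card ι * Fintype.card κ * b +
      Fintype.card ι * β :=
  hA.exists_eigenvalues_eq one_ne_zero mulVec_one

theorem exists_eigenvalues_eq_of_one_lt_card_snd [Nonempty ι] (hκ : 1 < Fintype.card κ)
    (hA : (blockCovariateMatrix ι κ a b β).IsHermitian) :
    ∃ i, hA.eigenvalues i = Fintype.card ι * β := by
  obtain ⟨w, hw0, hw⟩ := exists_ne_zero_sum_eq_zero hκ
  exact hA.exists_eigenvalues_eq (fun h => hw0 (Prod.snd_surjective.injective_comp_right h))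
    (mulVec_comp_snd hw)

theorem exists_eigenvalues_eq_of_one_lt_card_fst [Nonempty κ] (hι : 1 < Fintype.card ι)
    (hA : (blockCovariateMatrix ι κ a b β).IsHermitian) :
    ∃ i, hA.eigenvalues i = Fintype.card κ * (a - b) := by
  obtain ⟨c, hc0, hc⟩ := exists_ne_zero_sum_eq_zero hι
  exact hA.exists_eigenvalues_eq (fun h => hc0 (Prod.fst_surjective.injective_comp_right h))
    (mulVec_comp_fst hc)

theorem rank_add_one [Nonempty ι] [Nonempty κ] (hb : 0 < b) (hab : b < a) (hβ : 0 < β) :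
    (blockCovariateMatrix ι κ a b β).rank + 1 = Fintype.card ι + Fintype.card κ := by
  have hK : (0 : ℝ) < Fintype.card ι := by exact_mod_cast Fintype.card_pos
  have hm : (0 : ℝ) < Fintype.card κ := by exact_mod_cast Fintype.card_pos
  have hab' : 0 < a - b := sub_pos.mpr hab
  have hker : LinearMap.ker (blockCovariateMatrix ι κ a b β).mulVecLin =
      LinearMap.ker marginals := by
    ext v
    simp only [LinearMap.mem_ker, mulVecLin_apply]
    refine ⟨fun hv => marginals_eq_zero_of_mulVec_eq_smul (μ := 0) (by rw [hv, zero_smul])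
      (by positivity) (by positivity) (by positivity), mulVec_eq_zero_of_marginals_eq_zero⟩
  have hB := LinearMap.finrank_range_add_finrank_ker (blockCovariateMatrix ι κ a b β).mulVecLin
  have hM := LinearMap.finrank_range_add_finrank_ker (marginals (ι := ι) (κ := κ))
  rw [hker, ← hM] at hB
  rw [rank, add_right_cancel hB, finrank_range_marginals]

end blockCovariateMatrix

theorem stmt_5_general (K : ℕ) (hK : 2 ≤ K) (a b β : ℝ)
    (hb : 0 < b) (hba : b < a) (hβ : 0 < β)
    (BZ : Matrix (Fin K × Fin 2) (Fin K × Fin 2) ℝ)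
    (hBZ : ∀ k ℓ : Fin K, ∀ z z' : Fin 2,
      BZ (k, z) (ℓ, z') = (if k = ℓ then a else b) + (if z = z' then β else 0))
    (hHerm : BZ.IsHermitian) :
    BZ.PosSemidef ∧ BZ.rank = K + 1 ∧
    (∀ i, hHerm.eigenvalues i ≠ 0 → hHerm.eigenvalues i ≤ 2*a + 2*(K - 1)*b + K*β) ∧
    (∃ i, hHerm.eigenvalues i = 2*a + 2*(K - 1)*b + K*β) ∧
    ((β ≤ 2*(a - b)/K →
        (∀ i, hHerm.eigenvalues i ≠ 0 → K*β ≤ hHerm.eigenvalues i) ∧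
        (∃ i, hHerm.eigenvalues i = K*β)) ∧
      (2*(a - b)/K < β →
        (∀ i, hHerm.eigenvalues i ≠ 0 → 2*(a - b) ≤ hHerm.eigenvalues i) ∧
        (∃ i, hHerm.eigenvalues i = 2*(a - b)))) := by
  obtain rfl : BZ = blockCovariateMatrix (Fin K) (Fin 2) a b β :=
    Matrix.ext fun p q => hBZ p.1 q.1 p.2 q.2
  have : Nonempty (Fin K) := ⟨⟨0, by omega⟩⟩
  have hKpos : (0 : ℝ) < K := by positivity
  have htop : (2 : ℝ) * (a - b) + K * 2 * b + K * β = 2*a + 2*(K - 1)*b + K*β := by ring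
  have hmem : ∀ i, hHerm.eigenvalues i ≠ 0 → hHerm.eigenvalues i = 2*a + 2*(K - 1)*b + K*β ∨
      hHerm.eigenvalues i = K * β ∨ hHerm.eigenvalues i = 2 * (a - b) := by
    intro i hi
    simpa [hi, htop] using blockCovariateMatrix.eigenvalues_mem hHerm i
  have hrank := blockCovariateMatrix.rank_add_one (ι := Fin K) (κ := Fin 2) hb hba hβ
  rw [Fintype.card_fin, Fintype.card_fin] at hrank
  refine ⟨blockCovariateMatrix.posSemidef hb.le hba.le hβ.le, by omega, ?_, ?_, ?_, ?_⟩
  · intro i hi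
    rcases hmem i hi with h | h | h <;> rw [h] <;> nlinarith
  · simpa [htop] using blockCovariateMatrix.exists_eigenvalues_eq_of_nonempty hHerm
  · intro hcase
    rw [le_div_iff₀ hKpos] at hcase
    refine ⟨fun i hi => ?_, by
      simpa using blockCovariateMatrix.exists_eigenvalues_eq_of_one_lt_card_snd (by simp) hHerm⟩
    rcases hmem i hi with h | h | h <;> rw [h] <;> nlinarith
  · intro hcase
    rw [div_lt_iff₀ hKpos] at hcase
    refine ⟨fun i hi => ?_, by
      simpa using blockCovariateMatrix.exists_eigenvalues_eq_of_one_lt_card_fst (by simpa) hHerm⟩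
    rcases hmem i hi with h | h | h <;> rw [h] <;> nlinarith

theorem stmt_5 (K : ℕ) (hK : 2 ≤ K) (a b β : ℝ)
    (hb : 0 < b) (hba : b < a) (ha : a < 1) (hβ : 0 < β) (hβ1 : β < 1)
    (BZ : Matrix (Fin K × Fin 2) (Fin K × Fin 2) ℝ)
    (hBZ : ∀ k ℓ : Fin K, ∀ z z' : Fin 2,
      BZ (k, z) (ℓ, z') = (if k = ℓ then a else b) + (if z = z' then β else 0))
    (hHerm : BZ.IsHermitian) :
    BZ.PosSemidef ∧ BZ.rank = K + 1 ∧
    (∀ i, hHerm.eigenvalues i ≠ 0 → hHerm.eigenvalues i ≤ 2*a + 2*(K - 1)*b + K*β) ∧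
    (∃ i, hHerm.eigenvalues i = 2*a + 2*(K - 1)*b + K*β) ∧
    ((β ≤ 2*(a - b)/K →
        (∀ i, hHerm.eigenvalues i ≠ 0 → K*β ≤ hHerm.eigenvalues i) ∧
        (∃ i, hHerm.eigenvalues i = K*β)) ∧
      (2*(a - b)/K < β →
        (∀ i, hHerm.eigenvalues i ≠ 0 → 2*(a - b) ≤ hHerm.eigenvalues i) ∧
        (∃ i, hHerm.eigenvalues i = 2*(a - b)))) :=
  stmt_5_general K hK a b β hb hba hβ BZ hBZ hHerm
end

section
/- For the 4×4 matrix B_Z of the two-block rank one model with binary covariate (entries built from p², q², pq plus β on covariate-matching pairs), B_Z = ν_Z ν_Z^⊤ where ν_Z ∈ ℝ^{4×3} has rows (√(p²+β), 0, 0), (p²/√(p²+β), √(β(2p²+β)/(p²+β)), 0), ((pq+β)/√(p²+β), √(βp²(q−p)²/((p²+β)(2p²+β))), √(β(q−p)²/(2p²+β))), and (pq/√(p²+β), √(β(p²+pq+β)²/((p²+β)(2p²+β))), √(β(q−p)²/(2p²+β))). -/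
/-!
`ν_Z` is the Cholesky factor of `B_Z`. Since `0 ≤ p ≤ q`, the quantities `p (q - p)`, `q - p` and
`p² + pq + β` are the square roots of their squares, so every radical in `ν_Z` is a rational
function of `p, q, β` times `√(p²+β)`, `√(2p²+β)` or `√β`, and the factorization becomes a rational
identity modulo the squares of these three roots.
-/

open Matrix

/-- The factor `ν_Z` with `a, b, c` standing for `√(p²+β)`, `√(2p²+β)`, `√β`. -/
noncomputable def twoBlockFactor (p q β a b c : ℝ) : Matrix (Fin 4) (Fin 3) ℝ :=
  !![a, 0, 0;
     p^2 / a, c * b / a, 0;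
     (p*q+β) / a, c * (p*(q-p)) / (a*b), c * (q-p) / b;
     p*q / a, c * (p^2+p*q+β) / (a*b), c * (q-p) / b]

theorem twoBlock_eq_twoBlockFactor_mul_transpose {p q β a b c : ℝ}
    (ha : a ^ 2 = p ^ 2 + β) (hb : b ^ 2 = 2 * p ^ 2 + β) (hc : c ^ 2 = β)
    (ha0 : a ≠ 0) (hb0 : b ≠ 0) :
    !![p^2+β, p^2, p*q+β, p*q;
       p^2, p^2+β, p*q, p*q+β;
       p*q+β, p*q, q^2+β, q^2;
       p*q, p*q+β, q^2, q^2+β] =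
      twoBlockFactor p q β a b c * (twoBlockFactor p q β a b c)ᵀ := by
  subst hc
  ext i j
  fin_cases i <;> fin_cases j <;>
    simp only [twoBlockFactor, mul_apply, Fin.sum_univ_three, transpose_apply, of_apply,
      cons_val', cons_val_zero, cons_val_one, cons_val, cons_val_fin_one, Fin.isValue,
      Fin.zero_eta, Fin.mk_one, Fin.reduceFinMk, mul_zero, zero_mul, add_zero] <;>
    field_simp <;> grind

theorem Real.sqrt_mul_sq_div {x y : ℝ} (hx : 0 ≤ x) (hy : 0 ≤ y) (d : ℝ) :
    √(x * y ^ 2 / d) = √x * y / √d := by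
  rw [Real.sqrt_div (by positivity), Real.sqrt_mul hx, Real.sqrt_sq hy]

theorem stmt_6_general (p q β : ℝ) (hp : 0 < p) (hpq : p < q) (hβ : 0 < β)
    (BZ : Matrix (Fin 4) (Fin 4) ℝ)
    (hBZ : BZ = !![p^2+β, p^2, p*q+β, p*q;
                   p^2, p^2+β, p*q, p*q+β;
                   p*q+β, p*q, q^2+β, q^2;
                   p*q, p*q+β, q^2, q^2+β])
    (νZ : Matrix (Fin 4) (Fin 3) ℝ)
    (hνZ : νZ = !![Real.sqrt (p^2+β), 0, 0;
                   p^2 / Real.sqrt (p^2+β), Real.sqrt (β*(2*p^2+β)/(p^2+β)), 0;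
                   (p*q+β) / Real.sqrt (p^2+β), Real.sqrt (β*p^2*(q-p)^2/((p^2+β)*(2*p^2+β))),
                     Real.sqrt (β*(q-p)^2/(2*p^2+β));
                   p*q / Real.sqrt (p^2+β), Real.sqrt (β*(p^2+p*q+β)^2/((p^2+β)*(2*p^2+β))),
                     Real.sqrt (β*(q-p)^2/(2*p^2+β))]) :
    BZ = νZ * νZ.transpose := by
  have hA : 0 < p ^ 2 + β := by positivity
  have hB : 0 < 2 * p ^ 2 + β := by positivity
  have hqp : 0 ≤ q - p := by linarith
  have hC : 0 ≤ p ^ 2 + p * q + β := by nlinarith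
  rw [show β * p ^ 2 * (q - p) ^ 2 = β * (p * (q - p)) ^ 2 by ring,
    Real.sqrt_mul_sq_div hβ.le hqp, Real.sqrt_mul_sq_div hβ.le (mul_nonneg hp.le hqp),
    Real.sqrt_mul_sq_div hβ.le hC, Real.sqrt_mul hA.le, Real.sqrt_div (by positivity),
    Real.sqrt_mul hβ.le] at hνZ
  rw [hBZ, hνZ]
  exact twoBlock_eq_twoBlockFactor_mul_transpose (Real.sq_sqrt hA.le) (Real.sq_sqrt hB.le)
    (Real.sq_sqrt hβ.le) (Real.sqrt_pos.2 hA).ne' (Real.sqrt_pos.2 hB).ne'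

theorem stmt_6 (p q β : ℝ) (hp : 0 < p) (hpq : p < q) (hq : q < 1) (hβ : 0 < β) (hβ1 : β < 1)
    (hr1 : p^2 + β ≤ 1) (hr2 : q^2 + β ≤ 1) (hr3 : p*q + β ≤ 1)
    (BZ : Matrix (Fin 4) (Fin 4) ℝ)
    (hBZ : BZ = !![p^2+β, p^2, p*q+β, p*q;
                   p^2, p^2+β, p*q, p*q+β;
                   p*q+β, p*q, q^2+β, q^2;
                   p*q, p*q+β, q^2, q^2+β])
    (νZ : Matrix (Fin 4) (Fin 3) ℝ)
    (hνZ : νZ = !![Real.sqrt (p^2+β), 0, 0;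
                   p^2 / Real.sqrt (p^2+β), Real.sqrt (β*(2*p^2+β)/(p^2+β)), 0;
                   (p*q+β) / Real.sqrt (p^2+β), Real.sqrt (β*p^2*(q-p)^2/((p^2+β)*(2*p^2+β))),
                     Real.sqrt (β*(q-p)^2/(2*p^2+β));
                   p*q / Real.sqrt (p^2+β), Real.sqrt (β*(p^2+p*q+β)^2/((p^2+β)*(2*p^2+β))),
                     Real.sqrt (β*(q-p)^2/(2*p^2+β))]) :
    BZ = νZ * νZ.transpose :=
  stmt_6_general p q β hp hpq hβ BZ hBZ νZ hνZ
end

section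
/- For the two-block rank one model with π₁ + π₂ = 1, π₁, π₂ > 0, and 0 < p < q < 1, define σ_p² = (π₁p⁴(1−p²)+π₂pq³(1−pq))/(π₁p²+π₂q²)² and σ_q² = (π₁p³q(1−pq)+π₂q⁴(1−q²))/(π₁p²+π₂q²)². Then with π₁ = π₂ = 1/2, sup_{t∈(0,1)} t(1−t)(p−q)²/(tσ_p²+(1−t)σ_q²) = (p−q)²(p²+q²)²/(2(√(p²φ_p+q²φ_{pq}) + √(q²φ_q+p²φ_{pq}))²), where φ_p = p²(1−p²), φ_q = q²(1−q²), φ_{pq} = pq(1−pq). -/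
/-!
For `A = a²`, `B = b²` the ratio `t (1 - t) c / (t A + (1 - t) B)` is maximised over `t ∈ (0, 1)`
at `t = b / (a + b)` with value `c / (a + b)²`. In the two-block model with equal block sizes both
asymptotic variances carry the common factor `2 / (p² + q²)²`, and pulling it out of the square
roots gives the closed form.
-/

open Real

theorem isGreatest_mul_one_sub_div {a b c : ℝ} (ha : 0 < a) (hb : 0 < b) (hc : 0 ≤ c) :
    IsGreatest {y : ℝ | ∃ t ∈ Set.Ioo (0 : ℝ) 1,
        y = t * (1 - t) * c / (t * a ^ 2 + (1 - t) * b ^ 2)} (c / (a + b) ^ 2) := by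
  constructor
  · refine ⟨b / (a + b), ⟨by positivity, (div_lt_one (by positivity)).2 (by linarith)⟩, ?_⟩
    have h1 : 1 - b / (a + b) = a / (a + b) := by field_simp; ring
    rw [h1]
    field_simp
  · rintro y ⟨t, ⟨ht0, ht1⟩, rfl⟩
    have hden : 0 < t * a ^ 2 + (1 - t) * b ^ 2 := by nlinarith [sq_pos_of_pos ha]
    rw [div_le_div_iff₀ hden (by positivity)]
    -- `t a² + (1 - t) b² - t (1 - t) (a + b)² = (t a - (1 - t) b)²`
    nlinarith [mul_nonneg hc (sq_nonneg (t * a - (1 - t) * b))]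

theorem sSup_mul_one_sub_div {A B c : ℝ} (hA : 0 < A) (hB : 0 < B) (hc : 0 ≤ c) :
    sSup {y : ℝ | ∃ t ∈ Set.Ioo (0 : ℝ) 1, y = t * (1 - t) * c / (t * A + (1 - t) * B)} =
      c / (√A + √B) ^ 2 := by
  have h := isGreatest_mul_one_sub_div (sqrt_pos.2 hA) (sqrt_pos.2 hB) hc
  rw [sq_sqrt hA.le, sq_sqrt hB.le] at h
  exact h.csSup_eq

theorem stmt_16 (p q : ℝ) (hp : 0 < p) (hpq : p < q) (hq : q < 1)
    (σp2 σq2 φp φq φpq : ℝ)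
    (hσp : σp2 = ((1/2) * p^4 * (1 - p^2) + (1/2) * p * q^3 * (1 - p*q)) /
      ((1/2) * p^2 + (1/2) * q^2) ^ 2)
    (hσq : σq2 = ((1/2) * p^3 * q * (1 - p*q) + (1/2) * q^4 * (1 - q^2)) /
      ((1/2) * p^2 + (1/2) * q^2) ^ 2)
    (hφp : φp = p^2 * (1 - p^2)) (hφq : φq = q^2 * (1 - q^2)) (hφpq : φpq = p*q*(1 - p*q)) :
    sSup {y : ℝ | ∃ t ∈ Set.Ioo (0 : ℝ) 1,
        y = t * (1 - t) * (p - q) ^ 2 / (t * σp2 + (1 - t) * σq2)} =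
      (p - q) ^ 2 * (p ^ 2 + q ^ 2) ^ 2 /
        (2 * (Real.sqrt (p^2 * φp + q^2 * φpq) + Real.sqrt (q^2 * φq + p^2 * φpq)) ^ 2) := by
  have hq0 : 0 < q := hp.trans hpq
  have hφp0 : 0 < φp := hφp ▸ mul_pos (by positivity) (by nlinarith)
  have hφq0 : 0 < φq := hφq ▸ mul_pos (by positivity) (by nlinarith)
  have hφpq0 : 0 < φpq := hφpq ▸ mul_pos (by positivity) (by nlinarith)
  set k : ℝ := 2 / (p ^ 2 + q ^ 2) ^ 2 with hk
  have hσp_factor : σp2 = k * (p^2 * φp + q^2 * φpq) := by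
    rw [hσp, hk, hφp, hφpq]; field_simp
  have hσq_factor : σq2 = k * (q^2 * φq + p^2 * φpq) := by
    rw [hσq, hk, hφq, hφpq]; field_simp; ring
  have hk0 : 0 < k := by positivity
  rw [sSup_mul_one_sub_div (hσp_factor ▸ by positivity) (hσq_factor ▸ by positivity) (sq_nonneg _),
    hσp_factor, hσq_factor, sqrt_mul hk0.le, sqrt_mul hk0.le, ← mul_add, mul_pow, sq_sqrt hk0.le, hk]
  field_simp
end
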